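/- arXiv:2311.07851 — 4 statements merged into one kernel-verified Lean document; each statement's English description precedes it below -/
import Mathlib

section
/- For every natural number n and positive integer r, the sum over i = 1 to n of i * binomial(n-i+r-1, 2r-1) equals binomial(n+r, 2r+1). -/
/-!
Write `r = s + 1`. After the substitution `i ↦ (i, n - i)` the sum runs over the antidiagonal,
and the identity `∑_{i + j = n} i * C(j + c, k) = C(n + c + 1, k + 2)` (for `c ≤ k`) follows by
induction on `n`: passing from `n` to `n + 1` adds `∑_{i + j = n} C(j + c, k) = C(n + c + 1, k + 1)`
(hockey stick) to the left side and, by Pascal's rule, the same amount to the right side.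
-/

open Finset

theorem sum_Icc_one_mul_eq_sum_antidiagonal (g : ℕ → ℕ) (n : ℕ) :
    ∑ i ∈ Icc 1 n, i * g (n - i) = ∑ p ∈ antidiagonal n, p.1 * g p.2 := by
  rw [Nat.sum_antidiagonal_eq_sum_range_succ (fun i j => i * g j)]
  refine sum_subset (fun i hi => ?_) (fun i hi hi' => ?_)
  · simp only [mem_Icc, mem_range] at hi ⊢; omega
  · obtain rfl : i = 0 := by simp only [mem_Icc, mem_range] at hi hi'; omega
    exact zero_mul _

theorem sum_antidiagonal_add_choose_of_le {c k : ℕ} (h : c ≤ k) (n : ℕ) :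
    ∑ p ∈ antidiagonal n, (p.2 + c).choose k = (n + c + 1).choose (k + 1) := by
  induction n with
  | zero =>
    rcases h.lt_or_eq with h | rfl
    · simp [Nat.choose_eq_zero_of_lt h, Nat.choose_eq_zero_of_lt (Nat.succ_lt_succ h)]
    · simp
  | succ n ih =>
    rw [Nat.sum_antidiagonal_succ, ih, Nat.add_right_comm n 1 c, Nat.choose_succ_succ' (n + c + 1),
      add_comm]

theorem sum_antidiagonal_mul_add_choose_of_le {c k : ℕ} (h : c ≤ k) (n : ℕ) :
    ∑ p ∈ antidiagonal n, p.1 * (p.2 + c).choose k = (n + c + 1).choose (k + 2) := by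
  induction n with
  | zero => simp [Nat.choose_eq_zero_of_lt (by omega : c + 1 < k + 2)]
  | succ n ih =>
    simp only [Nat.sum_antidiagonal_succ, zero_mul, zero_add, add_one_mul, sum_add_distrib, ih,
      sum_antidiagonal_add_choose_of_le h, Nat.add_right_comm n 1 c,
      Nat.choose_succ_succ' (n + c + 1)]
    exact add_comm _ _

theorem stmt_1 (n r : ℕ) (hr : 0 < r) :
    ∑ i ∈ Finset.Icc 1 n, i * (n - i + r - 1).choose (2 * r - 1)
      = (n + r).choose (2 * r + 1) := by
  obtain ⟨s, rfl⟩ := Nat.exists_eq_add_one_of_ne_zero hr.ne'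
  simp only [Nat.add_succ_sub_one, show 2 * (s + 1) - 1 = 2 * s + 1 by omega]
  rw [sum_Icc_one_mul_eq_sum_antidiagonal (fun j => (j + s).choose (2 * s + 1)),
    sum_antidiagonal_mul_add_choose_of_le (by omega)]
  congr 1
end

section
/- For every natural number n and positive integer r, the sum over i = 1 to n of i * binomial(n-i+r-1, 2r) equals binomial(n+r, 2r+2). -/
/-!
Induction on `n`: shifting the index `i ↦ i + 1` turns the weight `i + 1` into `i` plus one, so
the step adds the unweighted sum, a hockey-stick sum equal to `C(n+c+1, k+1)`, and Pascal's rule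
closes the induction. The condition `c ≤ k` is what makes both base cases match.
-/

open Finset

namespace Nat

theorem sum_range_choose_sub_add {c k : ℕ} (hc : c ≤ k) (n : ℕ) :
    ∑ i ∈ range (n + 1), (n - i + c).choose k = (n + c + 1).choose (k + 1) := by
  induction n with
  | zero =>
    rw [sum_range_one, Nat.zero_add, choose_succ_succ',
      choose_eq_zero_of_lt (by omega : c < k + 1)]
    rfl
  | succ n ih =>
    rw [sum_range_succ']
    simp only [Nat.add_sub_add_right, Nat.sub_zero]
    rw [ih, show n + 1 + c + 1 = (n + c + 1) + 1 by omega, choose_succ_succ' (n + c + 1),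
      show n + 1 + c = n + c + 1 by omega, add_comm]

theorem sum_range_mul_choose_sub_add {c k : ℕ} (hc : c ≤ k) (n : ℕ) :
    ∑ i ∈ range (n + 1), i * (n - i + c).choose k = (n + c + 1).choose (k + 2) := by
  induction n with
  | zero => simp [choose_eq_zero_of_lt (by omega : c + 1 < k + 2)]
  | succ n ih =>
    rw [sum_range_succ']
    simp only [Nat.add_sub_add_right, add_one_mul, sum_add_distrib, zero_mul, add_zero]
    rw [ih, sum_range_choose_sub_add hc, show n + 1 + c + 1 = (n + c + 1) + 1 by omega,
      choose_succ_succ' (n + c + 1), add_comm]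

end Nat

theorem stmt_2 (n r : ℕ) (hr : 0 < r) :
    ∑ i ∈ Finset.Icc 1 n, i * (n - i + r - 1).choose (2 * r)
      = (n + r).choose (2 * r + 2) := by
  have hsum := Nat.sum_range_mul_choose_sub_add (show r - 1 ≤ 2 * r by omega) n
  rw [show n + (r - 1) + 1 = n + r by omega, range_eq_Ico, sum_eq_sum_Ico_succ_bot (by omega),
    zero_mul, zero_add, Ico_add_one_right_eq_Icc] at hsum
  rw [← hsum]
  refine sum_congr rfl fun i _ => ?_
  rw [Nat.add_sub_assoc hr]
end

section
/- For every natural number n and positive integer r, the sum of the products x_1 * x_2 * ... * x_r over all r-tuples of nonnegative integers (x_1,...,x_r) with x_1 + ... + x_r = n equals binomial(n+r-1, 2r-1). -/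
/-!
Write `F r n` for the sum. Splitting off the first coordinate gives
`F (r + 1) n = ∑_{a + b = n} a · F r b`. Since `a = C(a, 1)`, induction on `r` reduces to the
upper Vandermonde identity `∑_{i + j = n} C(i, p) C(j + c, q) = C(n + c + 1, p + q + 1)`
(for `c ≤ q`), which turns `C(b + r - 1, 2r - 1)` into `C(n + r, 2r + 1)`.
-/

open Finset

theorem Finset.Nat.sum_antidiagonalTuple_succ {M : Type*} [AddCommMonoid M] (k n : ℕ)
    (f : (Fin (k + 1) → ℕ) → M) :
    ∑ x ∈ Nat.antidiagonalTuple (k + 1) n, f x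
      = ∑ p ∈ antidiagonal n, ∑ y ∈ Nat.antidiagonalTuple k p.2, f (Fin.cons p.1 y) := by
  change (Multiset.map f (Multiset.ofList (List.Nat.antidiagonalTuple (k + 1) n))).sum
    = (Multiset.map _ (Multiset.ofList (List.Nat.antidiagonal n))).sum
  simp only [Multiset.map_coe, Multiset.sum_coe, List.Nat.antidiagonalTuple, List.flatMap,
    List.map_flatten, List.sum_flatten, List.map_map]
  congr 1
  refine List.map_congr_left fun p _ => ?_
  change _ = (Multiset.map _ (Multiset.ofList _)).sum
  simp only [Multiset.map_coe, Multiset.sum_coe, List.map_map, Function.comp_apply]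
  rfl

theorem Nat.sum_antidiagonal_choose_mul_choose (p : ℕ) :
    ∀ n q : ℕ, ∑ ij ∈ antidiagonal n, ij.1.choose p * ij.2.choose q
      = (n + 1).choose (p + q + 1)
  | 0, q => by
    rcases p with _ | p <;> rcases q with _ | q <;> simp <;>
      exact (Nat.choose_eq_zero_of_lt (by omega)).symm
  | n + 1, 0 => by
    have ih := Nat.sum_antidiagonal_choose_mul_choose p n 0
    simp only [Nat.choose_zero_right, mul_one, add_zero] at ih ⊢
    rw [Nat.sum_antidiagonal_succ', ih]
    exact (Nat.choose_succ_succ' (n + 1) p).symm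
  | n + 1, q + 1 => by
    rw [Nat.sum_antidiagonal_succ']
    simp only [Nat.choose_succ_succ' _ q, mul_add, sum_add_distrib,
      Nat.sum_antidiagonal_choose_mul_choose p n, Nat.choose_zero_succ, mul_zero, zero_add]
    exact (Nat.choose_succ_succ' (n + 1) (p + q + 1)).symm

theorem Nat.sum_antidiagonal_choose_mul_choose_add (p q : ℕ) :
    ∀ c ≤ q, ∀ n : ℕ, ∑ ij ∈ antidiagonal n, ij.1.choose p * (ij.2 + c).choose q
      = (n + c + 1).choose (p + q + 1)
  | 0, _, n => Nat.sum_antidiagonal_choose_mul_choose p n q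
  | c + 1, hc, n => by
    have shift := Nat.sum_antidiagonal_choose_mul_choose_add p q c (by omega) (n + 1)
    -- the extra term `(n + 1, 0)` vanishes because `c < q`
    rw [Nat.sum_antidiagonal_succ', zero_add, Nat.choose_eq_zero_of_lt (by omega : c < q),
      mul_zero, zero_add] at shift
    simpa only [add_right_comm _ 1 c, add_assoc] using shift

theorem Finset.Nat.sum_antidiagonalTuple_prod (s n : ℕ) :
    ∑ x ∈ Nat.antidiagonalTuple (s + 1) n, ∏ i, x i = (n + s).choose (2 * s + 1) := by
  induction s generalizing n with
  | zero => simp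
  | succ s ih =>
    rw [Nat.sum_antidiagonalTuple_succ]
    have conv := Nat.sum_antidiagonal_choose_mul_choose_add 1 (2 * s + 1) s (by omega) n
    simp only [Nat.choose_one_right] at conv
    simp only [Fin.prod_cons, ← mul_sum, ih, conv]
    congr 1
    ring

theorem stmt_3 (n r : ℕ) (hr : 0 < r) :
    ∑ x ∈ Finset.Nat.antidiagonalTuple r n, ∏ i, x i
      = (n + r - 1).choose (2 * r - 1) := by
  obtain ⟨s, rfl⟩ : ∃ s, r = s + 1 := ⟨r - 1, by omega⟩
  rw [Finset.Nat.sum_antidiagonalTuple_prod, show n + (s + 1) - 1 = n + s by omega,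
    show 2 * (s + 1) - 1 = 2 * s + 1 by omega]
end

section
/- Suppose (p_0, β_+, β_-) ∈ (0,1)^3 satisfies the system: p_0[1 + β_+/(1-β_+)^2 + β_- /(1-β_-)] = 1, p_0[(β_+^2+β_+)/(1-β_+)^3 - β_- /(1-β_-)^2] = μ, and p_0 β_- /(1-β_-)^2 = μν, for positive reals μ, ν. Then β_+ satisfies the quartic equation c_4 β_+^4 + c_3 β_+^3 + c_2 β_+^2 + c_1 β_+ + c_0 = 0 with c_0 = 1 - ν/(1+ν) - 1/(μ(1+ν)), c_1 = 1/(μ²(1+ν)²) + 2ν/(1+ν) - 3, c_2 = 2/(μ²(1+ν)²) + 4, c_3 = 1/(μ²(1+ν)²) - 2ν/(1+ν) - 3, c_4 = 1/(μ(1+ν)) + ν/(1+ν) + 1. -/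
/-!
Write `x = β₋/(1-β₋)`, so that `β₋/(1-β₋)² = x + x²`, and `M = μ(1+ν)`, which by adding the
last two constraints is `p₀ β₊(1+β₊)/(1-β₊)³`. Normalization gives `p₀ x = 1 - p₀(1 + β₊/(1-β₊)²)`,
and then the debt constraint `p₀ (x + x²) = μν` becomes an equation in `p₀` and `β₊` alone.
Substituting `p₀ = M(1-β₊)³/(β₊(1+β₊))` and clearing denominators leaves `β₊ M²` times the quartic.
-/

theorem div_one_sub_sq_eq_add_sq {K : Type*} [Field K] (b : K) :
    b / (1 - b) ^ 2 = b / (1 - b) + (b / (1 - b)) ^ 2 := by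
  rcases eq_or_ne b 1 with rfl | hb
  · simp
  · have : 1 - b ≠ 0 := sub_ne_zero.2 hb.symm
    field_simp
    ring

theorem sq_add_mul_eq_of_mul_add_eq_one {R : Type*} [CommRing R] {p A x c : R}
    (hnorm : p * (1 + A + x) = 1) (hx : p * (x + x ^ 2) = c) :
    (1 - p * (1 + A)) ^ 2 + p * (1 - p * (1 + A)) = c * p := by
  linear_combination p * hx + (p * (1 + A + x) - 1 - 2 * p * x - p) * hnorm

theorem polynomial_relation_of_mean_eq {p b M c : ℝ} (ha : 1 - b ≠ 0)
    (hmean : p * ((b ^ 2 + b) / (1 - b) ^ 3) = M)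
    (h : (1 - p * (1 + b / (1 - b) ^ 2)) ^ 2 + p * (1 - p * (1 + b / (1 - b) ^ 2)) = c * p) :
    (b ^ 2 + b - M * (1 - b) * ((1 - b) ^ 2 + b)) ^ 2
        + M * (1 - b) ^ 3 * (b ^ 2 + b - M * (1 - b) * ((1 - b) ^ 2 + b))
      = c * (M * (1 - b) ^ 3) * (b ^ 2 + b) := by
  have hp : M * (1 - b) ^ 3 = p * (b ^ 2 + b) := by
    rw [← hmean]
    field_simp
  have hN : b ^ 2 + b - M * (1 - b) * ((1 - b) ^ 2 + b)
      = (b ^ 2 + b) * (1 - p * (1 + b / (1 - b) ^ 2)) :=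
    calc _ = b ^ 2 + b - M * (1 - b) ^ 3 * (1 + b / (1 - b) ^ 2) := by field_simp
      _ = _ := by rw [hp]; ring
  rw [hN, hp]
  linear_combination (b ^ 2 + b) ^ 2 * h

theorem quartic_eq_zero_of_poly_relation {μ ν b : ℝ} (hμ : μ ≠ 0) (hν : 1 + ν ≠ 0) (hb : b ≠ 0)
    (h : (b ^ 2 + b - μ * (1 + ν) * (1 - b) * ((1 - b) ^ 2 + b)) ^ 2
        + μ * (1 + ν) * (1 - b) ^ 3 * (b ^ 2 + b - μ * (1 + ν) * (1 - b) * ((1 - b) ^ 2 + b))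
      = μ * ν * (μ * (1 + ν) * (1 - b) ^ 3) * (b ^ 2 + b)) :
    (1 / (μ * (1 + ν)) + ν / (1 + ν) + 1) * b ^ 4
      + (1 / (μ ^ 2 * (1 + ν) ^ 2) - 2 * ν / (1 + ν) - 3) * b ^ 3
      + (2 / (μ ^ 2 * (1 + ν) ^ 2) + 4) * b ^ 2
      + (1 / (μ ^ 2 * (1 + ν) ^ 2) + 2 * ν / (1 + ν) - 3) * b
      + (1 - ν / (1 + ν) - 1 / (μ * (1 + ν))) = 0 := by
  have hscale : b * (μ * (1 + ν)) ^ 2 ≠ 0 := by positivity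
  refine (mul_eq_zero.1 ?_).resolve_left hscale
  field_simp
  linear_combination h

theorem stmt_17_general (μ ν p0 βp βm : ℝ) (hμ : 0 < μ) (hν : 0 < ν)
    (hβp0 : 0 < βp) (hβp1 : βp < 1)
    (h1 : p0 * (1 + βp / (1 - βp) ^ 2 + βm / (1 - βm)) = 1)
    (h2 : p0 * ((βp ^ 2 + βp) / (1 - βp) ^ 3 - βm / (1 - βm) ^ 2) = μ)
    (h3 : p0 * (βm / (1 - βm) ^ 2) = μ * ν) :
    (1 / (μ * (1 + ν)) + ν / (1 + ν) + 1) * βp ^ 4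
      + (1 / (μ ^ 2 * (1 + ν) ^ 2) - 2 * ν / (1 + ν) - 3) * βp ^ 3
      + (2 / (μ ^ 2 * (1 + ν) ^ 2) + 4) * βp ^ 2
      + (1 / (μ ^ 2 * (1 + ν) ^ 2) + 2 * ν / (1 + ν) - 3) * βp
      + (1 - ν / (1 + ν) - 1 / (μ * (1 + ν))) = 0 := by
  have hmean : p0 * ((βp ^ 2 + βp) / (1 - βp) ^ 3) = μ * (1 + ν) := by
    linear_combination h2 + h3
  have hdebt : p0 * (βm / (1 - βm) + (βm / (1 - βm)) ^ 2) = μ * ν := by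
    rwa [← div_one_sub_sq_eq_add_sq]
  exact quartic_eq_zero_of_poly_relation hμ.ne' (by positivity) hβp0.ne'
    (polynomial_relation_of_mean_eq (sub_ne_zero.2 hβp1.ne') hmean
      (sq_add_mul_eq_of_mul_add_eq_one h1 hdebt))

/-- If `(p₀, β₊, β₋) ∈ (0,1)³` satisfies the normalization, mean and debt constraints
for the equilibrium distribution, then `β₊` satisfies the quartic equation
`c₄β₊⁴ + c₃β₊³ + c₂β₊² + c₁β₊ + c₀ = 0` with the stated coefficients. -/
theorem stmt_17 (μ ν p0 βp βm : ℝ) (hμ : 0 < μ) (hν : 0 < ν)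
    (hp0 : 0 < p0) (hp0' : p0 < 1) (hβp0 : 0 < βp) (hβp1 : βp < 1)
    (hβm0 : 0 < βm) (hβm1 : βm < 1)
    (h1 : p0 * (1 + βp / (1 - βp) ^ 2 + βm / (1 - βm)) = 1)
    (h2 : p0 * ((βp ^ 2 + βp) / (1 - βp) ^ 3 - βm / (1 - βm) ^ 2) = μ)
    (h3 : p0 * (βm / (1 - βm) ^ 2) = μ * ν) :
    (1 / (μ * (1 + ν)) + ν / (1 + ν) + 1) * βp ^ 4
      + (1 / (μ ^ 2 * (1 + ν) ^ 2) - 2 * ν / (1 + ν) - 3) * βp ^ 3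
      + (2 / (μ ^ 2 * (1 + ν) ^ 2) + 4) * βp ^ 2
      + (1 / (μ ^ 2 * (1 + ν) ^ 2) + 2 * ν / (1 + ν) - 3) * βp
      + (1 - ν / (1 + ν) - 1 / (μ * (1 + ν))) = 0 :=
  stmt_17_general μ ν p0 βp βm hμ hν hβp0 hβp1 h1 h2 h3
end
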